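/- arXiv:2102.11717 — 2 statements merged into one kernel-verified Lean document; each statement's English description precedes it below -/
import Mathlib

section
/- If q ≤ Q* and the optimal policy π* belongs to the policy set Π̂ with N ≥ n+1, then ‖G q − Q*‖_∞ ≤ γ^{n+1} ‖q − Q*‖_∞ (exponential contraction rate). -/
open Finset Filter Topology

/-- A transition kernel: for each state-action pair, a probability distribution over states. -/
def IsKernel {S A : Type*} [Fintype S] (P : S × A → S → ℝ) : Prop :=
  ∀ p, (∀ s', 0 ≤ P p s') ∧ ∑ s', P p s' = 1

/-- A (stochastic) policy: for each state, a probability distribution over actions. -/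
def IsPolicy {S A : Type*} [Fintype A] (π : S → A → ℝ) : Prop :=
  ∀ s, (∀ a, 0 ≤ π s a) ∧ ∑ a, π s a = 1

/-- Bellman optimality operator: (B Q)(s,a) = r(s,a) + γ ∑_{s'} P(s'|s,a) max_{a'} Q(s',a'). -/
noncomputable def bOpt {S A : Type*} [Fintype S] [Fintype A] [Nonempty A]
    (P : S × A → S → ℝ) (r : S × A → ℝ) (γ : ℝ) (Q : S × A → ℝ) : S × A → ℝ :=
  fun p => r p + γ * ∑ s', P p s' * (univ.sup' univ_nonempty fun a' => Q (s', a'))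

/-- Bellman expectation operator for policy π:
    (B^π Q)(s,a) = r(s,a) + γ ∑_{s'} P(s'|s,a) ∑_{a'} π(a'|s') Q(s',a'). -/
noncomputable def bExp {S A : Type*} [Fintype S] [Fintype A]
    (P : S × A → S → ℝ) (r : S × A → ℝ) (γ : ℝ) (π : S → A → ℝ) (Q : S × A → ℝ) :
    S × A → ℝ :=
  fun p => r p + γ * ∑ s', P p s' * ∑ a', π s' a' * Q (s', a')

/-- Greedy Multi-Step Bellman Operator: G Q = max_{π ∈ Π̂} max_{1 ≤ n ≤ N} (B^π)^{n-1} B Q,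
    componentwise, over a finite nonempty policy set indexed by ι. -/
noncomputable def gOp {S A : Type*} [Fintype S] [Fintype A] [Nonempty A]
    (P : S × A → S → ℝ) (r : S × A → ℝ) (γ : ℝ)
    {ι : Type*} [Fintype ι] [Nonempty ι] (pol : ι → S → A → ℝ)
    (N : ℕ) (hN : 1 ≤ N) (Q : S × A → ℝ) : S × A → ℝ :=
  fun p => univ.sup' univ_nonempty fun i =>
    (Icc 1 N).sup' (nonempty_Icc.mpr hN) fun n =>
      ((bExp P r γ (pol i))^[n - 1] (bOpt P r γ Q)) p

/-! Every term of `G q` is an iterate of monotone operators that fix or decrease `Q*`, started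
at `B q ≤ B Q* = Q*`, so `G q ≤ Q*`. Conversely `Q* - ‖q - Q*‖ ≤ q`; since `B` and `B^{π*}`
commute with subtracting a constant up to a factor `γ` and fix `Q*`, the term
`(B^{π*})^n B q` of `G q` is at least `Q* - γ^(n+1) ‖q - Q*‖`. -/

theorem Finset.sum_mul_sub_const {ι : Type*} [Fintype ι] {w : ι → ℝ} (hw : ∑ i, w i = 1)
    (f : ι → ℝ) (c : ℝ) : ∑ i, w i * (f i - c) = ∑ i, w i * f i - c := by
  simp only [mul_sub, sum_sub_distrib, ← sum_mul, hw, one_mul]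

theorem Monotone.iterate_le_of_map_le_of_le {α : Type*} [Preorder α] {T : α → α}
    (hT : Monotone T) {a b : α} (hb : T b ≤ b) (hab : a ≤ b) (m : ℕ) : T^[m] a ≤ b :=
  (hT.iterate m hab).trans (hT.antitone_iterate_of_map_le hb (Nat.zero_le m))

theorem iterate_sub_const_of_map_eq {X : Type*} {T : (X → ℝ) → X → ℝ} {γ : ℝ}
    (hT : ∀ Q c, T (fun x => Q x - c) = fun x => T Q x - γ * c) {Q : X → ℝ} (hQ : T Q = Q)
    (c : ℝ) (m : ℕ) : T^[m] (fun x => Q x - c) = fun x => Q x - γ ^ m * c := by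
  induction m with
  | zero => simp
  | succ m ih => rw [Function.iterate_succ_apply', ih, hT, hQ, pow_succ', mul_assoc]

section Bellman

variable {S A : Type*} [Fintype S] [Fintype A] {P : S × A → S → ℝ} {r : S × A → ℝ} {γ : ℝ}

theorem bExp_mono (hγ : 0 ≤ γ) (hP : IsKernel P) {π : S → A → ℝ} (hπ : IsPolicy π) :
    Monotone (bExp P r γ π) := fun Q₁ Q₂ h p => by
  unfold bExp
  gcongr with s' _ a' _
  · exact (hP p).1 s'
  · exact (hπ s').1 a'
  · exact h _

theorem bExp_sub_const (hP : IsKernel P) {π : S → A → ℝ} (hπ : IsPolicy π)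
    (Q : S × A → ℝ) (c : ℝ) :
    bExp P r γ π (fun p => Q p - c) = fun p => bExp P r γ π Q p - γ * c := by
  funext p
  simp only [bExp, sum_mul_sub_const (hπ _).2, sum_mul_sub_const (hP p).2]
  ring

variable [Nonempty A]

theorem bOpt_mono (hγ : 0 ≤ γ) (hP : IsKernel P) : Monotone (bOpt P r γ) := fun Q₁ Q₂ h p => by
  unfold bOpt
  gcongr with s' _
  · exact (hP p).1 s'
  · exact h _

theorem bOpt_sub_const (hP : IsKernel P) (Q : S × A → ℝ) (c : ℝ) :
    bOpt P r γ (fun p => Q p - c) = fun p => bOpt P r γ Q p - γ * c := by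
  funext p
  have hsup : ∀ s', (univ.sup' univ_nonempty fun a => Q (s', a) - c)
      = univ.sup' univ_nonempty (fun a => Q (s', a)) - c := fun s' => by
    simpa only [sub_eq_add_neg] using
      (sup'_add univ (fun a => Q (s', a)) (-c) univ_nonempty).symm
  simp only [bOpt, hsup, sum_mul_sub_const (hP p).2]
  ring

theorem bExp_le_bOpt (hγ : 0 ≤ γ) (hP : IsKernel P) {π : S → A → ℝ} (hπ : IsPolicy π)
    (Q : S × A → ℝ) : bExp P r γ π Q ≤ bOpt P r γ Q := fun p => by
  unfold bExp bOpt
  gcongr with s' _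
  · exact (hP p).1 s'
  · calc ∑ a, π s' a * Q (s', a)
        ≤ ∑ a, π s' a * univ.sup' univ_nonempty (fun a => Q (s', a)) := by
          gcongr with a _
          · exact (hπ s').1 a
          · exact le_sup' (fun a => Q (s', a)) (mem_univ a)
      _ = univ.sup' univ_nonempty (fun a => Q (s', a)) := by
          rw [← sum_mul, (hπ s').2, one_mul]

section Greedy

variable {ι : Type*} [Fintype ι] [Nonempty ι] {pol : ι → S → A → ℝ} {N : ℕ} {hN : 1 ≤ N}

theorem iterate_bExp_bOpt_le_gOp (i : ι) {m : ℕ} (hm : m ∈ Icc 1 N) (q : S × A → ℝ) :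
    (bExp P r γ (pol i))^[m - 1] (bOpt P r γ q) ≤ gOp P r γ pol N hN q := fun p =>
  (le_sup' (fun m => ((bExp P r γ (pol i))^[m - 1] (bOpt P r γ q)) p) hm).trans
    (le_sup' (f := fun i => (Icc 1 N).sup' _ fun m =>
      ((bExp P r γ (pol i))^[m - 1] (bOpt P r γ q)) p) (mem_univ i))

theorem gOp_le_of_le_fixedPoint (hγ : 0 ≤ γ) (hP : IsKernel P) (hpol : ∀ i, IsPolicy (pol i))
    {Qstar : S × A → ℝ} (hQ : bOpt P r γ Qstar = Qstar) {q : S × A → ℝ} (hq : q ≤ Qstar) :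
    gOp P r γ pol N hN q ≤ Qstar := fun p =>
  sup'_le _ _ fun i _ => sup'_le _ _ fun m _ =>
    (bExp_mono hγ hP (hpol i)).iterate_le_of_map_le_of_le
      ((bExp_le_bOpt hγ hP (hpol i) Qstar).trans hQ.le)
      (hQ ▸ bOpt_mono hγ hP hq) (m - 1) p

end Greedy

theorem sub_const_le_iterate_bExp_bOpt (hγ : 0 ≤ γ) (hP : IsKernel P) {π : S → A → ℝ}
    (hπ : IsPolicy π) {Qstar : S × A → ℝ} (hQ : bOpt P r γ Qstar = Qstar)
    (hopt : bExp P r γ π Qstar = Qstar) {q : S × A → ℝ} {c : ℝ}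
    (hq : (fun p => Qstar p - c) ≤ q) (n : ℕ) :
    (fun p => Qstar p - γ ^ (n + 1) * c) ≤ (bExp P r γ π)^[n] (bOpt P r γ q) := by
  have hstep : (fun p => Qstar p - γ * c) ≤ bOpt P r γ q := by
    have h := bOpt_mono (r := r) hγ hP hq
    rwa [bOpt_sub_const hP, hQ] at h
  have hiter := (bExp_mono (r := r) hγ hP hπ).iterate n hstep
  rwa [iterate_sub_const_of_map_eq (bExp_sub_const hP hπ) hopt, ← mul_assoc, ← pow_succ]
    at hiter

end Bellman

theorem sub_norm_sub_le {X : Type*} [Fintype X] (f g : X → ℝ) :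
    (fun x => g x - ‖f - g‖) ≤ f := fun x => by
  have h : |f x - g x| ≤ ‖f - g‖ := by simpa using norm_le_pi_norm (f - g) x
  linarith [(abs_le.mp h).1]

theorem norm_sub_le_of_sub_const_le_of_le {X : Type*} [Fintype X] {f g : X → ℝ} {c : ℝ}
    (hc : 0 ≤ c) (hlow : (fun x => g x - c) ≤ f) (hup : f ≤ g) : ‖f - g‖ ≤ c := by
  refine (pi_norm_le_iff_of_nonneg hc).mpr fun x => ?_
  rw [Pi.sub_apply, Real.norm_eq_abs, abs_le]
  constructor <;> linarith [hlow x, hup x]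

theorem greedy_multistep_exponential_contraction_general
    {S A : Type*} [Fintype S] [Fintype A] [Nonempty A]
    (P : S × A → S → ℝ) (r : S × A → ℝ) (γ : ℝ) (hγ0 : 0 < γ)
    (hP : IsKernel P)
    {ι : Type*} [Fintype ι] [Nonempty ι]
    (pol : ι → S → A → ℝ) (hpol : ∀ i, IsPolicy (pol i))
    (N : ℕ) (hN : 1 ≤ N)
    (Qstar : S × A → ℝ) (hQ : bOpt P r γ Qstar = Qstar)
    (πstar : S → A → ℝ)
    (hopt : bExp P r γ πstar Qstar = Qstar)
    (hmem : ∃ i, pol i = πstar)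
    (n : ℕ) (hn : n + 1 ≤ N)
    (q : S × A → ℝ) (hq : ∀ p, q p ≤ Qstar p) :
    ‖gOp P r γ pol N hN q - Qstar‖ ≤ γ ^ (n + 1) * ‖q - Qstar‖ := by
  obtain ⟨i, rfl⟩ := hmem
  have hG_le : gOp P r γ pol N hN q ≤ Qstar := gOp_le_of_le_fixedPoint hγ0.le hP hpol hQ hq
  have hG_ge : (fun p => Qstar p - γ ^ (n + 1) * ‖q - Qstar‖) ≤ gOp P r γ pol N hN q :=
    (sub_const_le_iterate_bExp_bOpt hγ0.le hP (hpol i) hQ hopt (sub_norm_sub_le q Qstar) n).trans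
      (iterate_bExp_bOpt_le_gOp i (mem_Icc.mpr ⟨Nat.le_add_left 1 n, hn⟩) q)
  exact norm_sub_le_of_sub_const_le_of_le (by positivity) hG_ge hG_le

/-- if q ≤ Q* and the optimal policy π* belongs to Π̂ with N ≥ n+1, then
    ‖G q − Q*‖ ≤ γ^{n+1} ‖q − Q*‖. -/
theorem greedy_multistep_exponential_contraction
    {S A : Type*} [Fintype S] [Fintype A] [Nonempty S] [Nonempty A]
    (P : S × A → S → ℝ) (r : S × A → ℝ) (γ : ℝ) (hγ0 : 0 < γ) (hγ1 : γ < 1)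
    (hP : IsKernel P)
    {ι : Type*} [Fintype ι] [Nonempty ι]
    (pol : ι → S → A → ℝ) (hpol : ∀ i, IsPolicy (pol i))
    (N : ℕ) (hN : 1 ≤ N)
    (Qstar : S × A → ℝ) (hQ : bOpt P r γ Qstar = Qstar)
    (πstar : S → A → ℝ) (hπstar : IsPolicy πstar)
    (hopt : bExp P r γ πstar Qstar = Qstar)
    (hmem : ∃ i, pol i = πstar)
    (n : ℕ) (hn : n + 1 ≤ N)
    (q : S × A → ℝ) (hq : ∀ p, q p ≤ Qstar p) :
    ‖gOp P r γ pol N hN q - Qstar‖ ≤ γ ^ (n + 1) * ‖q - Qstar‖ :=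
  greedy_multistep_exponential_contraction_general P r γ hγ0 hP pol hpol N hN Qstar hQ πstar hopt
    hmem n hn q hq
end

section
/- The Multi-Step Optimality Operator (B_Π̂^N Q)(s₀,a₀) = max_{π∈Π̂} E_{τ∼π}[ Σ_{t=0}^{N-1} γ^t r(s_t,a_t) + γ^N max_{a'} Q(s_N,a') ] is a γ^N-contraction in sup norm: ‖B_Π̂^N q − B_Π̂^N q'‖_∞ ≤ γ^N ‖q − q'‖_∞. -/
open Finset Filter Topology

/-- Multi-Step Optimality Operator: B Q = max over policies of (B^pi)^[N-1] (bOpt Q),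
    i.e. roll out the policy for N steps and bootstrap the last step with a max. -/
noncomputable def mOp {S A : Type*} [Fintype S] [Fintype A] [Nonempty A]
    (P : S × A → S → ℝ) (r : S × A → ℝ) (γ : ℝ)
    {ι : Type*} [Fintype ι] [Nonempty ι] (pol : ι → S → A → ℝ)
    (N : ℕ) (Q : S × A → ℝ) : S × A → ℝ :=
  fun p => Finset.univ.sup' Finset.univ_nonempty fun i =>
    ((bExp P r γ (pol i))^[N - 1] (bOpt P r γ Q)) p


private lemma abs_sup'_sub_sup'_le {α : Type*} (s : Finset α) (hs : s.Nonempty)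
    (f g : α → ℝ) (C : ℝ) (h : ∀ a ∈ s, |f a - g a| ≤ C) :
    |s.sup' hs f - s.sup' hs g| ≤ C := by
  rw [abs_le]
  constructor
  · rw [neg_le, neg_sub, sub_le_iff_le_add]
    refine Finset.sup'_le _ _ fun a ha => ?_
    have h1 := (abs_le.mp (h a ha)).1
    have h2 := Finset.le_sup' f ha
    linarith
  · rw [sub_le_iff_le_add]
    refine Finset.sup'_le _ _ fun a ha => ?_
    have h1 := (abs_le.mp (h a ha)).2
    have h2 := Finset.le_sup' g ha
    linarith

private lemma bOpt_contract {S A : Type*} [Fintype S] [Fintype A] [Nonempty S] [Nonempty A]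
    (P : S × A → S → ℝ) (r : S × A → ℝ) (γ : ℝ) (hγ0 : 0 < γ)
    (hP : IsKernel P) (q q' : S × A → ℝ) (C : ℝ) (hC : ∀ p, |q p - q' p| ≤ C)
    (p : S × A) : |bOpt P r γ q p - bOpt P r γ q' p| ≤ γ * C := by
  have hC0 : 0 ≤ C := le_trans (abs_nonneg _) (hC (Classical.arbitrary _))
  simp only [bOpt]
  rw [add_sub_add_left_eq_sub, ← mul_sub, abs_mul, abs_of_pos hγ0, ← Finset.sum_sub_distrib]
  refine mul_le_mul_of_nonneg_left ?_ hγ0.le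
  calc |∑ s', (P p s' * Finset.univ.sup' Finset.univ_nonempty (fun a' => q (s', a'))
        - P p s' * Finset.univ.sup' Finset.univ_nonempty (fun a' => q' (s', a')))|
      ≤ ∑ s', |P p s' * Finset.univ.sup' Finset.univ_nonempty (fun a' => q (s', a'))
        - P p s' * Finset.univ.sup' Finset.univ_nonempty (fun a' => q' (s', a'))| :=
        Finset.abs_sum_le_sum_abs _ _
    _ ≤ ∑ s', P p s' * C := by
        refine Finset.sum_le_sum fun s' _ => ?_
        rw [← mul_sub, abs_mul, abs_of_nonneg ((hP p).1 s')]
        refine mul_le_mul_of_nonneg_left ?_ ((hP p).1 s')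
        exact abs_sup'_sub_sup'_le _ _ _ _ _ fun a _ => hC (s', a)
    _ = C := by rw [← Finset.sum_mul, (hP p).2, one_mul]

private lemma bExp_contract {S A : Type*} [Fintype S] [Fintype A]
    (P : S × A → S → ℝ) (r : S × A → ℝ) (γ : ℝ) (hγ0 : 0 < γ)
    (hP : IsKernel P) (π : S → A → ℝ) (hπ : IsPolicy π)
    (q q' : S × A → ℝ) (C : ℝ) (hC0 : 0 ≤ C) (hC : ∀ p, |q p - q' p| ≤ C)
    (p : S × A) : |bExp P r γ π q p - bExp P r γ π q' p| ≤ γ * C := by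
  simp only [bExp]
  rw [add_sub_add_left_eq_sub, ← mul_sub, abs_mul, abs_of_pos hγ0, ← Finset.sum_sub_distrib]
  refine mul_le_mul_of_nonneg_left ?_ hγ0.le
  calc |∑ s', (P p s' * ∑ a', π s' a' * q (s', a') - P p s' * ∑ a', π s' a' * q' (s', a'))|
      ≤ ∑ s', |P p s' * ∑ a', π s' a' * q (s', a') - P p s' * ∑ a', π s' a' * q' (s', a')| :=
        Finset.abs_sum_le_sum_abs _ _
    _ ≤ ∑ s', P p s' * C := by
        refine Finset.sum_le_sum fun s' _ => ?_
        rw [← mul_sub, abs_mul, abs_of_nonneg ((hP p).1 s')]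
        refine mul_le_mul_of_nonneg_left ?_ ((hP p).1 s')
        rw [← Finset.sum_sub_distrib]
        calc |∑ a', (π s' a' * q (s', a') - π s' a' * q' (s', a'))|
            ≤ ∑ a', |π s' a' * q (s', a') - π s' a' * q' (s', a')| :=
              Finset.abs_sum_le_sum_abs _ _
          _ ≤ ∑ a', π s' a' * C := by
              refine Finset.sum_le_sum fun a' _ => ?_
              rw [← mul_sub, abs_mul, abs_of_nonneg ((hπ s').1 a')]
              exact mul_le_mul_of_nonneg_left (hC _) ((hπ s').1 a')
          _ = C := by rw [← Finset.sum_mul, (hπ s').2, one_mul]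
    _ = C := by rw [← Finset.sum_mul, (hP p).2, one_mul]

/-- the Multi-Step Optimality Operator is a γ^N-contraction in sup norm. -/
theorem multistep_optimality_contraction
    {S A : Type*} [Fintype S] [Fintype A] [Nonempty S] [Nonempty A]
    (P : S × A → S → ℝ) (r : S × A → ℝ) (γ : ℝ) (hγ0 : 0 < γ) (hγ1 : γ < 1)
    (hP : IsKernel P)
    {ι : Type*} [Fintype ι] [Nonempty ι]
    (pol : ι → S → A → ℝ) (hpol : ∀ i, IsPolicy (pol i))
    (N : ℕ) (hN : 1 ≤ N) (q q' : S × A → ℝ) :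
    ‖mOp P r γ pol N q - mOp P r γ pol N q'‖ ≤ γ ^ N * ‖q - q'‖ := by
  set C := ‖q - q'‖ with hCdef
  have hC0 : 0 ≤ C := norm_nonneg _
  have hCpt : ∀ p, |q p - q' p| ≤ C := by
    intro p
    have := norm_le_pi_norm (q - q') p
    simpa [Real.norm_eq_abs] using this
  -- pointwise bound on iterates
  have key : ∀ n i p, |((bExp P r γ (pol i))^[n] (bOpt P r γ q)) p
      - ((bExp P r γ (pol i))^[n] (bOpt P r γ q')) p| ≤ γ ^ (n + 1) * C := by
    intro n i
    induction n with
    | zero => simpa using bOpt_contract P r γ hγ0 hP q q' C hCpt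
    | succ n ih =>
      intro p
      rw [Function.iterate_succ_apply', Function.iterate_succ_apply']
      have := bExp_contract P r γ hγ0 hP (pol i) (hpol i)
        _ _ (γ ^ (n + 1) * C)
        (mul_nonneg (pow_nonneg hγ0.le _) hC0) ih p
      calc _ ≤ γ * (γ ^ (n + 1) * C) := this
        _ = γ ^ (n + 1 + 1) * C := by ring
  have hpt : ∀ p, |mOp P r γ pol N q p - mOp P r γ pol N q' p| ≤ γ ^ N * C := by
    intro p
    have := abs_sup'_sub_sup'_le (Finset.univ) Finset.univ_nonempty
      (fun i => ((bExp P r γ (pol i))^[N - 1] (bOpt P r γ q)) p)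
      (fun i => ((bExp P r γ (pol i))^[N - 1] (bOpt P r γ q')) p)
      (γ ^ N * C) (fun i _ => by
        have := key (N - 1) i p
        rwa [Nat.sub_add_cancel hN] at this)
    simpa [mOp] using this
  rw [show (γ : ℝ) ^ N * ‖q - q'‖ = γ ^ N * C from rfl]
  refine (pi_norm_le_iff_of_nonneg (mul_nonneg (pow_nonneg hγ0.le _) hC0)).mpr ?_
  intro p
  simpa [Real.norm_eq_abs] using hpt p
end
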